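/- Echo state property as uniqueness over bi-infinite time: let W^res be an N×N real matrix with ℓ²-operator norm strictly less than 1, let W^in be an N×D real matrix, and let u : ℤ → ℝ^D be any input signal. If x, x̃ : ℤ → ℝ^N are two bounded state trajectories both satisfying x(t+1) = tanh.(W^res x(t) + W^in u(t+1)) for all t ∈ ℤ, then x(t) = x̃(t) for every t ∈ ℤ; i.e., the echo state at each time is uniquely determined by the left-infinite input history. -/

import Mathlib

open Filter Topology

/-- Componentwise hyperbolic tangent on Euclidean space. -/
noncomputable def tanhVec {n : ℕ} (v : EuclideanSpace ℝ (Fin n)) : EuclideanSpace ℝ (Fin n) :=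
  WithLp.toLp 2 (fun i => Real.tanh (v i))

/-- The action `x ↦ W x` of a matrix on Euclidean space (equal to `Matrix.mulVec`). -/
noncomputable def mulVecE {m n : ℕ} (W : Matrix (Fin m) (Fin n) ℝ)
    (x : EuclideanSpace ℝ (Fin n)) : EuclideanSpace ℝ (Fin m) :=
  Matrix.toEuclideanLin W x

/-- The ℓ²-operator norm of a matrix (its largest singular value). -/
noncomputable def opNorm {m n : ℕ} (W : Matrix (Fin m) (Fin n) ℝ) : ℝ :=
  ‖LinearMap.toContinuousLinearMap (Matrix.toEuclideanLin W)‖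

/-! Since `tanh` is 1-Lipschitz, one step of the recursion contracts the distance between two
trajectories driven by the same input by the factor `‖W^res‖ < 1`. Going `n` steps back from
time `t` therefore bounds `‖x t - x' t‖` by `‖W^res‖ ^ n` times a uniform bound on the distance of
the two bounded trajectories, and this tends to `0`. -/

namespace Real

theorem hasDerivAt_tanh (x : ℝ) : HasDerivAt tanh (cosh x ^ 2)⁻¹ x := by
  have h := (hasDerivAt_sinh x).div (hasDerivAt_cosh x) (cosh_pos x).ne'
  rw [← sq, ← sq, cosh_sq_sub_sinh_sq, one_div] at h
  rwa [show tanh = sinh / cosh from funext tanh_eq_sinh_div_cosh]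

theorem lipschitzWith_tanh : LipschitzWith 1 tanh :=
  lipschitzWith_of_nnnorm_deriv_le (fun x => (hasDerivAt_tanh x).differentiableAt) fun x => by
    rw [(hasDerivAt_tanh x).deriv, ← NNReal.coe_le_coe, coe_nnnorm, norm_inv, norm_pow,
      norm_of_nonneg (cosh_pos x).le, NNReal.coe_one]
    exact inv_le_one_of_one_le₀ (one_le_pow₀ (one_le_cosh x))

end Real

theorem LipschitzWith.euclideanSpace_map {ι : Type*} [Fintype ι] {f : ℝ → ℝ} {K : NNReal}
    (hf : LipschitzWith K f) :
    LipschitzWith K (fun v : EuclideanSpace ℝ ι => WithLp.toLp 2 (fun i => f (v i))) := by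
  refine LipschitzWith.of_dist_le_mul fun v w => ?_
  rw [EuclideanSpace.dist_eq, EuclideanSpace.dist_eq, ← Real.sqrt_sq K.coe_nonneg,
    ← Real.sqrt_mul (sq_nonneg _), Finset.mul_sum]
  gcongr with i
  rw [← mul_pow]
  exact pow_le_pow_left₀ dist_nonneg (hf.dist_le_mul _ _) 2

theorem lipschitzWith_tanhVec (n : ℕ) : LipschitzWith 1 (tanhVec (n := n)) :=
  Real.lipschitzWith_tanh.euclideanSpace_map

theorem norm_mulVecE_le {m n : ℕ} (W : Matrix (Fin m) (Fin n) ℝ) (v : EuclideanSpace ℝ (Fin n)) :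
    ‖mulVecE W v‖ ≤ opNorm W * ‖v‖ :=
  (LinearMap.toContinuousLinearMap (Matrix.toEuclideanLin W)).le_opNorm v

theorem dist_tanhVec_mulVecE_add_le {n : ℕ} (W : Matrix (Fin n) (Fin n) ℝ)
    (b x y : EuclideanSpace ℝ (Fin n)) :
    dist (tanhVec (mulVecE W x + b)) (tanhVec (mulVecE W y + b)) ≤ opNorm W * dist x y := by
  calc dist (tanhVec (mulVecE W x + b)) (tanhVec (mulVecE W y + b))
      ≤ dist (mulVecE W x + b) (mulVecE W y + b) := by
        simpa using (lipschitzWith_tanhVec n).dist_le_mul (mulVecE W x + b) (mulVecE W y + b)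
    _ = ‖mulVecE W (x - y)‖ := by
        rw [dist_add_right, dist_eq_norm, mulVecE, mulVecE, mulVecE, map_sub]
    _ ≤ opNorm W * dist x y := by rw [dist_eq_norm]; exact norm_mulVecE_le W (x - y)

theorem eq_zero_of_bddAbove_of_forall_succ_le_mul {d : ℤ → ℝ} {ρ : ℝ} (hρ0 : 0 ≤ ρ) (hρ : ρ < 1)
    (hd : ∀ t, 0 ≤ d t) (hbdd : BddAbove (Set.range d)) (hstep : ∀ t, d (t + 1) ≤ ρ * d t)
    (t : ℤ) : d t = 0 := by
  obtain ⟨C, hC⟩ := hbdd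
  have hiter : ∀ n : ℕ, d t ≤ ρ ^ n * d (t - n) := by
    intro n
    induction n with
    | zero => simp
    | succ n ih =>
      calc d t ≤ ρ ^ n * d (t - n) := ih
        _ ≤ ρ ^ n * (ρ * d (t - (n + 1 : ℕ))) := by
          gcongr
          simpa only [Nat.cast_succ, sub_add_eq_sub_sub, sub_add_cancel] using
            hstep (t - (n + 1 : ℕ))
        _ = ρ ^ (n + 1) * d (t - (n + 1 : ℕ)) := by ring
  have hlim : Tendsto (fun n : ℕ => ρ ^ n * C) atTop (𝓝 0) := by
    simpa using (tendsto_pow_atTop_nhds_zero_of_lt_one hρ0 hρ).mul_const C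
  refine le_antisymm (ge_of_tendsto' hlim fun n => ?_) (hd t)
  exact (hiter n).trans (by gcongr; exact hC ⟨_, rfl⟩)

/-- Echo state property: uniqueness of bounded bi-infinite state trajectories. -/
theorem esn_echo_state_property (N D : ℕ)
    (Wres : Matrix (Fin N) (Fin N) ℝ) (Win : Matrix (Fin N) (Fin D) ℝ)
    (hW : opNorm Wres < 1)
    (u : ℤ → EuclideanSpace ℝ (Fin D))
    (x x' : ℤ → EuclideanSpace ℝ (Fin N))
    (hxb : ∃ C : ℝ, ∀ t : ℤ, ‖x t‖ ≤ C)
    (hx'b : ∃ C : ℝ, ∀ t : ℤ, ‖x' t‖ ≤ C)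
    (hx : ∀ t : ℤ, x (t + 1) = tanhVec (mulVecE Wres (x t) + mulVecE Win (u (t + 1))))
    (hx' : ∀ t : ℤ, x' (t + 1) = tanhVec (mulVecE Wres (x' t) + mulVecE Win (u (t + 1)))) :
    ∀ t : ℤ, x t = x' t := by
  obtain ⟨C, hC⟩ := hxb
  obtain ⟨C', hC'⟩ := hx'b
  have hbdd : BddAbove (Set.range fun t => dist (x t) (x' t)) :=
    ⟨C + C', Set.forall_mem_range.2 fun t =>
      (dist_le_norm_add_norm _ _).trans (add_le_add (hC t) (hC' t))⟩
  have hstep (t : ℤ) : dist (x (t + 1)) (x' (t + 1)) ≤ opNorm Wres * dist (x t) (x' t) := by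
    rw [hx, hx']
    exact dist_tanhVec_mulVecE_add_le _ _ _ _
  intro t
  exact dist_eq_zero.1 <| eq_zero_of_bddAbove_of_forall_succ_le_mul (norm_nonneg _) hW
    (fun _ => dist_nonneg) hbdd hstep t
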